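/- If g : [0,1] → ℝ is smooth and vanishes identically in a neighborhood of x = 1 (with all derivatives), then the function t ↦ g(t²), extended from [-1,1] periodically with period 2, is a smooth periodic function on ℝ. -/
import Mathlib

open Filter

noncomputable def Hext (g : ℝ → ℝ) (t : ℝ) : ℝ := g ((t - 2 * (round (t/2) : ℝ))^2)

lemma round_eq_of_abs_lt {x : ℝ} {n : ℤ} (h : |x - n| < 1/2) : round x = n := by
  rw [round_eq, Int.floor_eq_iff]
  rw [abs_lt] at h
  constructor <;> push_cast <;> linarith

/-- If `g` is smooth and vanishes identically near `x = 1`, then `t ↦ g(t²)` on `[-1,1]`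
extends to a smooth `2`-periodic function on `ℝ`. -/
theorem smooth_periodic_extension (g : ℝ → ℝ) (hg : ContDiff ℝ (⊤ : ℕ∞) g)
    (ε : ℝ) (hε : 0 < ε) (hvanish : ∀ x ∈ Set.Icc (1 - ε) 1, g x = 0) :
    ∃ h : ℝ → ℝ, ContDiff ℝ (⊤ : ℕ∞) h ∧ Function.Periodic h 2 ∧
      ∀ t ∈ Set.Icc (-1 : ℝ) 1, h t = g (t ^ 2) := by
  refine ⟨Hext g, ?_, ?_, ?_⟩
  · rw [contDiff_iff_contDiffAt]
    intro t₀
    set n : ℤ := round (t₀ / 2) with hn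
    have hhalf : |t₀ / 2 - n| ≤ 1/2 := abs_sub_round _
    by_cases hd : |t₀ - 2 * n| < 1
    · -- locally equal to `g ((t - 2n)^2)`
      have hsm : ContDiff ℝ (⊤ : ℕ∞) (fun t : ℝ => g ((t - 2 * (n : ℝ))^2)) :=
        hg.comp ((contDiff_id.sub contDiff_const).pow 2)
      refine hsm.contDiffAt.congr_of_eventuallyEq ?_
      rw [Filter.EventuallyEq, Metric.eventually_nhds_iff]
      refine ⟨1 - |t₀ - 2 * n|, by linarith, fun t ht => ?_⟩
      have hr : round (t / 2) = n := by
        apply round_eq_of_abs_lt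
        rw [Real.dist_eq] at ht
        have h1 : |t / 2 - n| ≤ |t/2 - t₀/2| + |t₀/2 - n| := abs_sub_le _ _ _
        have h2 : |t/2 - t₀/2| = |t - t₀| / 2 := by
          rw [show t/2 - t₀/2 = (t - t₀)/2 by ring, abs_div]; norm_num
        have h3 : |t₀/2 - n| = |t₀ - 2*n| / 2 := by
          rw [show |t₀ - 2*(n:ℝ)| = |2 * (t₀/2 - n)| by congr 1; ring,
            abs_mul]
          norm_num
        rw [h2, h3] at h1
        linarith
      simp [Hext, hr]
    · -- t₀ is an odd integer; `Hext g` vanishes near t₀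
      have h2eq : |t₀ - 2 * (n:ℝ)| = 2 * |t₀/2 - n| := by
        rw [show |t₀ - 2*(n:ℝ)| = |2 * (t₀/2 - n)| by congr 1; ring, abs_mul]
        norm_num
      have hd1 : |t₀ - 2 * (n:ℝ)| = 1 :=
        le_antisymm (by rw [h2eq]; linarith) (not_lt.mp hd)
      refine (contDiffAt_const (c := (0:ℝ))).congr_of_eventuallyEq ?_
      rw [Filter.EventuallyEq, Metric.eventually_nhds_iff]
      set δ : ℝ := min (ε/2) (1/2) with hδ
      have hδ0 : 0 < δ := by positivity
      have hδε : δ ≤ ε/2 := min_le_left _ _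
      have hδh : δ ≤ 1/2 := min_le_right _ _
      refine ⟨δ, hδ0, fun t ht => ?_⟩
      rw [Real.dist_eq] at ht
      set m : ℤ := round (t / 2) with hm
      have hub : |t - 2 * m| ≤ 1 := by
        have := abs_sub_round (t/2)
        have h2 : |t - 2*(m:ℝ)| = 2 * |t/2 - m| := by
          rw [show |t - 2*(m:ℝ)| = |2 * (t/2 - m)| by congr 1; ring, abs_mul]
          norm_num
        rw [h2]; linarith
      have hodd : (1:ℝ) ≤ |t₀ - 2 * m| := by
        rcases abs_eq (by norm_num : (0:ℝ) ≤ 1) |>.mp hd1 with h | h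
        · have hcast : t₀ - 2*(m:ℝ) = ((2*(n - m) + 1 : ℤ) : ℝ) := by
            push_cast; linarith
          rw [hcast, ← Int.cast_abs]
          exact_mod_cast Int.one_le_abs (by omega)
        · have hcast : t₀ - 2*(m:ℝ) = ((2*(n - m) - 1 : ℤ) : ℝ) := by
            push_cast; linarith
          rw [hcast, ← Int.cast_abs]
          exact_mod_cast Int.one_le_abs (by omega)
      have hlb : 1 - δ ≤ |t - 2 * m| := by
        have h1 : |t₀ - 2*m| ≤ |t₀ - t| + |t - 2*m| := by
          have := abs_sub_le t₀ t (2*(m:ℝ)); linarith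
        have h2 : |t₀ - t| = |t - t₀| := abs_sub_comm _ _
        linarith [h1, h2 ▸ h1]
      have harg : (t - 2 * (m:ℝ))^2 ∈ Set.Icc (1 - ε) 1 := by
        constructor
        · have h1 : (1 - δ)^2 ≤ |t - 2*(m:ℝ)|^2 := by
            apply pow_le_pow_left₀ (by linarith) hlb
          rw [sq_abs] at h1
          nlinarith
        · have h1 : |t - 2*(m:ℝ)|^2 ≤ 1^2 := by
            apply pow_le_pow_left₀ (abs_nonneg _) hub
          rw [sq_abs] at h1
          linarith
      simpa [Hext, hm] using hvanish _ harg
  · intro t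
    have h1 : (t + 2) / 2 = t/2 + 1 := by ring
    have h2 : round ((t + 2)/2) = round (t/2) + 1 := by
      rw [h1, round_add_one]
    simp only [Hext, h2]
    congr 1
    push_cast
    ring
  · intro t ht
    obtain ⟨ht1, ht2⟩ := ht
    by_cases h1 : t = 1
    · subst h1
      have : round ((1:ℝ)/2) = 1 := by
        rw [round_eq]; norm_num
      simp only [Hext, this]
      norm_num
    · have hlt : t < 1 := lt_of_le_of_ne ht2 h1
      have hr : round (t/2) = 0 := by
        rw [round_eq, Int.floor_eq_zero_iff]
        constructor <;> simp <;> linarith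
      simp [Hext, hr]
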